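/- For every pseudo-Oboolean function f: {0,1}^n → ℝ and every i, j ∈ N, the Banzhaf influence index satisfies Φ_B(f,{i,j}) = Φ_B(f,{i}) + Φ_B(f,{j}). -/

import Mathlib

open Finset

/-- The (non-weighted) Banzhaf influence index
`Φ_B(f,S) = 2^{-(n-|S|)} Σ_{T⊆N∖S} (f(T∪S) − f(T))`. -/
noncomputable def banzhafInfluence {n : ℕ} (f : Finset (Fin n) → ℝ) (S : Finset (Fin n)) : ℝ :=
  (1 / 2 ^ (n - S.card)) * ∑ T ∈ (univ \ S).powerset, (f (T ∪ S) - f T)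

/-!
Split the sums defining `Φ_B(f,{i})` and `Φ_B(f,{j})` according to whether `T` contains the
other index. Over `T ⊆ N ∖ {i,j}` the four marginal contributions
`f(T+i) − f(T)`, `f(T+i+j) − f(T+j)`, `f(T+j) − f(T)`, `f(T+i+j) − f(T+i)` telescope to
`2 (f(T+i+j) − f(T))`, so the unnormalized sums satisfy `D{i} + D{j} = 2 D{i,j}`, and the extra
factor `2` is exactly absorbed by the normalizations `2^{-(n-1)}` and `2^{-(n-2)}`.
-/

section MarginalSums

variable {α G : Type*} [Fintype α] [DecidableEq α] [AddCommGroup G] {i j : α}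

theorem sum_powerset_compl_singleton (hij : i ≠ j) (g : Finset α → G) :
    ∑ T ∈ (univ \ {i}).powerset, g T =
      ∑ T ∈ (univ \ {i, j}).powerset, (g T + g (insert j T)) := by
  have hcompl : univ \ {i} = insert j (univ \ {i, j}) := by
    ext x
    by_cases hx : x = j <;> simp [hx, hij.symm]
  rw [hcompl, sum_powerset_insert (by simp), sum_add_distrib]

theorem sum_marginal_singleton_add_eq_two_smul_sum_marginal_pair (hij : i ≠ j) (f : Finset α → G) :
    ∑ T ∈ (univ \ {i}).powerset, (f (T ∪ {i}) - f T) +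
        ∑ T ∈ (univ \ {j}).powerset, (f (T ∪ {j}) - f T) =
      2 • ∑ T ∈ (univ \ {i, j}).powerset, (f (T ∪ {i, j}) - f T) := by
  rw [sum_powerset_compl_singleton hij, sum_powerset_compl_singleton hij.symm, pair_comm j i,
    ← sum_add_distrib, smul_sum]
  refine sum_congr rfl fun T _ => ?_
  simp only [union_singleton, union_insert, insert_comm j i]
  abel

end MarginalSums

/-- `Φ_B(f,{i,j}) = Φ_B(f,{i}) + Φ_B(f,{j})` for distinct `i, j`. -/
theorem banzhafInfluence_pair (n : ℕ) (f : Finset (Fin n) → ℝ) (i j : Fin n) (hij : i ≠ j) :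
    banzhafInfluence f {i, j} = banzhafInfluence f {i} + banzhafInfluence f {j} := by
  have hn : 2 ≤ n := by simpa [card_pair hij] using card_le_univ ({i, j} : Finset (Fin n))
  have hscale : (1 / 2 ^ (n - 2) : ℝ) = 1 / 2 ^ (n - 1) * 2 := by
    rw [show n - 1 = n - 2 + 1 by omega, pow_succ]
    field_simp
  unfold banzhafInfluence
  rw [card_pair hij, card_singleton, card_singleton, ← mul_add,
    sum_marginal_singleton_add_eq_two_smul_sum_marginal_pair hij, nsmul_eq_mul, hscale]
  ring
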